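/- Assume that 2^μ = μ⁺ for every limit cardinal μ and that there are no Mahlo cardinals. Then for every set A of infinite regular cardinals, spec(A) ⊆ pcf(A) ∪ lim(A): every regular cardinal in spec(A) either belongs to pcf(A) or is a limit point of A. -/

import Mathlib

universe u

open Cardinal Set

namespace TukeySpec

/-- A subset `S` of a preorder is cofinal if every element has an upper bound in `S`. -/
def IsCofinal {P : Type*} [Preorder P] (S : Set P) : Prop :=
  ∀ p : P, ∃ s ∈ S, p ≤ s

/-- `Q` is a Tukey quotient of `P` (i.e. `P ≥_T Q`): there is a map `P → Q`
sending cofinal sets to cofinal sets. -/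
def TukeyQuot (P : Type*) (Q : Type*) [Preorder P] [Preorder Q] : Prop :=
  ∃ φ : P → Q, ∀ S : Set P, IsCofinal S → IsCofinal (φ '' S)

/-- `P` has calibre `(κ, l, m)`. -/
def Calibre (P : Type u) [Preorder P] (κ l m : Cardinal.{u}) : Prop :=
  ∀ P' : Set P, #P' = κ → ∃ R ⊆ P', #R = l ∧ ∀ B ⊆ R, #B = m → BddAbove B

/-- `P` has calibre `κ` (the simplified form): every `κ`-sized subset has a
`κ`-sized subset which is bounded in `P`. -/
def CalibreSimple (P : Type u) [Preorder P] (κ : Cardinal.{u}) : Prop :=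
  ∀ P' : Set P, #P' = κ → ∃ R ⊆ P', #R = κ ∧ BddAbove R

/-- The Tukey spectrum of a poset: all regular cardinals `κ` with `P ≥_T κ`,
where `κ` carries its usual (ordinal) ordering. -/
def specPoset (P : Type u) [Preorder P] : Set Cardinal.{u} :=
  {κ | κ.IsRegular ∧ TukeyQuot P ↥(Set.Iio κ.ord)}

/-- The product `∏A` of a set of cardinals: all functions on `A` with
`f a < a` (as ordinals). -/
def piSet (A : Set Cardinal.{0}) : Set (↥A → Ordinal.{0}) :=
  {f | ∀ a : ↥A, f a < (a : Cardinal).ord}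

/-- A family of members of `∏A` is bounded if it has an upper bound in `(∏A, ≤)`
(pointwise order). -/
def BddIn (A : Set Cardinal.{0}) (S : Set (↥A → Ordinal.{0})) : Prop :=
  ∃ h ∈ piSet A, ∀ f ∈ S, ∀ a : ↥A, f a ≤ h a

/-- The Tukey spectrum of a set `A` of regular cardinals: all regular `κ` for which
there is a `κ`-sized family `F ⊆ ∏A` all of whose `κ`-sized subfamilies are
unbounded in `(∏A, ≤)`. -/
def spec (A : Set Cardinal.{0}) : Set Cardinal.{0} :=
  {κ | κ.IsRegular ∧ ∃ F ⊆ piSet A, #F = Cardinal.lift.{1} κ ∧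
    ∀ F₀ ⊆ F, #F₀ = Cardinal.lift.{1} κ → ¬ BddIn A F₀}

/-- `cf(∏A/D)`: the least cardinality of a subset of `∏A` which is cofinal
modulo the ultrafilter `D`. -/
noncomputable def cofUlt (A : Set Cardinal.{0}) (D : Ultrafilter ↥A) : Cardinal.{1} :=
  sInf {c : Cardinal.{1} | ∃ S ⊆ piSet A, #S = c ∧
    ∀ f ∈ piSet A, ∃ g ∈ S, {a : ↥A | f a ≤ g a} ∈ D}

/-- `pcf(A)`: the set of all cofinalities `cf(∏A/D)` as `D` ranges over
ultrafilters on `A`. -/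
def pcf (A : Set Cardinal.{0}) : Set Cardinal.{0} :=
  {κ | ∃ D : Ultrafilter ↥A, Cardinal.lift.{1} κ = cofUlt A D}

/-- `ub(F)`: the set of coordinates `a ∈ A` where the family `F` is unbounded. -/
def ub (A : Set Cardinal.{0}) (F : Set (↥A → Ordinal.{0})) : Set ↥A :=
  {a | ∀ β < (a : Cardinal).ord, ∃ f ∈ F, β < f a}

/-- The strong part of the Tukey spectrum: `l ∈ spec*(A)` iff there is an
`l`-sized family `F ⊆ ∏A` such that every `l`-sized subfamily has a set of
unbounded coordinates which is unbounded in `sup A`. -/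
def specStarMem (A : Set Cardinal.{0}) (l : Cardinal.{0}) : Prop :=
  l.IsRegular ∧ ∃ F ⊆ piSet A, #F = Cardinal.lift.{1} l ∧
    ∀ F₀ ⊆ F, #F₀ = Cardinal.lift.{1} l →
      ∀ β < sSup A, ∃ a ∈ ub A F₀, β < (a : Cardinal)

/-- `κ` is a limit point of the set `X` of cardinals. -/
def IsLimitPt (X : Set Cardinal.{0}) (κ : Cardinal.{0}) : Prop :=
  ∀ β < κ, ∃ x ∈ X, β < x ∧ x < κ

/-- `C` is a closed unbounded subset of `κ`. -/
def IsClubIn (C : Set Ordinal.{0}) (κ : Ordinal.{0}) : Prop :=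
  C ⊆ Set.Iio κ ∧ (∀ β < κ, ∃ o ∈ C, β < o) ∧
    ∀ β < κ, β ≠ 0 → (∀ γ < β, ∃ o ∈ C, γ < o ∧ o < β) → β ∈ C

/-- A set `S` of cardinals is stationary in `κ`: it meets every club of `κ`. -/
def StatIn (S : Set Cardinal.{0}) (κ : Cardinal.{0}) : Prop :=
  ∀ C : Set Ordinal.{0}, IsClubIn C κ.ord → ∃ a ∈ S, a.ord ∈ C

/-- `κ` is Mahlo: strongly inaccessible and the regular cardinals below `κ`
are stationary in `κ`. -/
def IsMahlo (κ : Cardinal.{0}) : Prop :=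
  κ.IsInaccessible ∧ StatIn {a | a < κ ∧ a.IsRegular} κ

/-- `κ` is weakly compact: strongly inaccessible and `κ → (κ)²₂`. -/
def IsWeaklyCompact (κ : Cardinal.{0}) : Prop :=
  κ.IsInaccessible ∧
    ∀ c : Ordinal.{0} → Ordinal.{0} → Bool,
      ∃ H ⊆ Set.Iio κ.ord, #H = Cardinal.lift.{1} κ ∧
        ∃ b : Bool, ∀ α ∈ H, ∀ β ∈ H, α < β → c α β = b

/-- `θ` carries a Jónsson algebra: there is `F` from finite subsets of `θ` to `θ`
such that `F` applied to finite subsets of any `θ`-sized `H ⊆ θ` covers `θ`. -/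
def CarriesJonsson (θ : Cardinal.{0}) : Prop :=
  ∃ F : Finset Ordinal.{0} → Ordinal.{0},
    (∀ s : Finset Ordinal.{0}, (↑s : Set Ordinal) ⊆ Set.Iio θ.ord → F s < θ.ord) ∧
    ∀ H ⊆ Set.Iio θ.ord, #H = Cardinal.lift.{1} θ →
      ∀ γ < θ.ord, ∃ s : Finset Ordinal.{0}, (↑s : Set Ordinal) ⊆ H ∧ F s = γ

/-- `cf(∏A/J_bd)`: the least cardinality of a subset of `∏A` cofinal modulo
the ideal of bounded subsets of `A`. -/
noncomputable def cofJbd (A : Set Cardinal.{0}) : Cardinal.{1} :=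
  sInf {c : Cardinal.{1} | ∃ S ⊆ piSet A, #S = c ∧
    ∀ f ∈ piSet A, ∃ g ∈ S, ∃ b < sSup A, ∀ a : ↥A, b < (a : Cardinal) → f a ≤ g a}

/-- `μ` is a limit cardinal. -/
def IsLimitCard (μ : Cardinal.{0}) : Prop :=
  ℵ₀ ≤ μ ∧ ∀ ν < μ, Order.succ ν < μ

/-!
Let `κ ∈ spec A` be neither in `A` (then the principal ultrafilter at `κ` puts it in `pcf A`) nor
a limit point of `A`, so that `B = A ∩ κ` is bounded below `κ`. Any `κ` members of `∏A` are
bounded on the coordinates above `κ`, which are regular, so pigeonholing their restrictions to `B`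
gives `κ ≤ |∏B|`. Splitting off the top coordinate, GCH at limit cardinals yields by induction on
`μ = sup B` that `|∏B| ≤ μ⁺`, and even `|∏B| ≤ μ` when `μ` is an isolated maximum of `B`. Hence
`κ = μ⁺` and `B` is cofinal in `μ`. An ultrafilter concentrating on the points of `B` isolated from
below has `cf(∏B/D) > μ` by diagonalization, so `cf(∏B/D) = μ⁺ = κ`; it pushes forward to `A`.
-/

universe v

section

variable {A B : Set Cardinal.{0}}

theorem exists_lt_ord_forall_lt {c : Cardinal.{u}} (hc : c.IsRegular) {ι : Type v}
    {f : ι → Ordinal.{u}} (hι : lift.{u} #ι < lift.{v} c)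
    (hf : ∀ i, f i < c.ord) : ∃ o < c.ord, ∀ i, f i < o := by
  refine ⟨⨆ i, f i + 1, Ordinal.lift_iSup_add_one_lt_of_lt_cof ?_ hf, fun i => ?_⟩
  · rwa [← Ordinal.lift_cof, hc.cof_ord]
  have hbdd : BddAbove (range fun i => f i + 1) := ⟨c.ord, by
    rintro _ ⟨i, rfl⟩; exact Order.add_one_le_iff.2 (hf i)⟩
  exact (Order.lt_add_one_iff.2 le_rfl).trans_le (le_ciSup hbdd i)

theorem zero_mem_piSet (hA : 0 ∉ A) : (0 : ↥A → Ordinal.{0}) ∈ piSet A := fun a =>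
  ord_pos.2 (pos_iff_ne_zero.2 fun h => hA (h ▸ a.2))

theorem single_mem_piSet [DecidableEq ↥A] (hA : 0 ∉ A) {a : ↥A} {o : Ordinal.{0}}
    (ho : o < (a : Cardinal).ord) : Pi.single a o ∈ piSet A := by
  intro b
  rcases eq_or_ne b a with rfl | hb
  · simpa using ho
  · simpa [Pi.single_apply, hb] using zero_mem_piSet hA b

theorem bddIn_of_forall_exists {F : Set (↥A → Ordinal.{0})}
    (h : ∀ a : ↥A, ∃ o < (a : Cardinal).ord, ∀ f ∈ F, f a ≤ o) : BddIn A F := by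
  choose g hg hgF using h
  exact ⟨g, hg, fun f hf a => hgF a f hf⟩

theorem mk_piSet_le_one (hB : B = ∅) : #(piSet B) ≤ 1 := by
  subst hB
  exact mk_le_one_iff_set_subsingleton.2 fun f _ g _ => funext fun b => b.2.elim

theorem mk_le_lift_sSup (hbdd : BddAbove B) (hB : ℵ₀ ≤ sSup B) :
    #B ≤ lift.{1} (sSup B) := by
  have hinj : Set.InjOn ord B := fun a _ b _ h => ord_injective h
  calc #B = #(ord '' B) := (mk_image_eq_of_injOn _ _ hinj).symm
    _ ≤ #(Iic (sSup B).ord) := mk_le_mk_of_subset <| by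
      rintro _ ⟨b, hb, rfl⟩; exact ord_le_ord.2 (le_csSup hbdd hb)
    _ ≤ #(Iio (sSup B).ord) + 1 := by rw [← Iio_insert]; exact mk_insert_le
    _ = lift.{1} (sSup B) := by
      rw [mk_Iio_ordinal, card_ord, add_one_eq (aleph0_le_lift.2 hB)]

theorem mk_piSet_le_lift_two_power (hbdd : BddAbove B) (hB : ℵ₀ ≤ sSup B) :
    #(piSet B) ≤ lift.{1} (2 ^ sSup B) := by
  have hinj : Function.Injective fun (f : piSet B) (b : B) =>
      (⟨f.1 b, (f.2 b).trans_le (ord_le_ord.2 (le_csSup hbdd b.2))⟩ :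
        Iio (sSup B).ord) :=
    fun f g h => Subtype.ext (funext fun b => congrArg Subtype.val (congrFun h b))
  calc #(piSet B) ≤ #(B → Iio (sSup B).ord) := mk_le_of_injective hinj
    _ = lift.{1} (sSup B) ^ #B := by rw [← power_def, mk_Iio_ordinal, card_ord]
    _ ≤ lift.{1} (sSup B) ^ lift.{1} (sSup B) :=
      power_le_power_left (by simpa using (aleph0_pos.trans_le hB).ne')
        (mk_le_lift_sSup hbdd hB)
    _ = lift.{1} (2 ^ sSup B) := by
      rw [power_self_eq (aleph0_le_lift.2 hB), lift_two_power]

theorem mk_piSet_le_mul_of_isGreatest {μ : Cardinal.{0}} (hμ : IsGreatest B μ) :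
    #(piSet B) ≤ #(piSet (B ∩ Iio μ)) * lift.{1} μ := by
  have hinj : Function.Injective fun f : piSet B =>
      ((⟨fun b => f.1 ⟨b.1, b.2.1⟩, fun b => f.2 _⟩ : piSet (B ∩ Iio μ)),
       (⟨f.1 ⟨μ, hμ.1⟩, f.2 ⟨μ, hμ.1⟩⟩ : Iio μ.ord)) := by
    intro f g h
    obtain ⟨hlow, htop⟩ := Prod.ext_iff.1 h
    refine Subtype.ext (funext fun b => ?_)
    rcases (hμ.2 b.2).lt_or_eq with hb | hb
    · exact congrFun (congrArg Subtype.val hlow) ⟨b.1, b.2, hb⟩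
    · obtain rfl : b = ⟨μ, hμ.1⟩ := Subtype.ext hb
      exact congrArg Subtype.val htop
  refine (mk_le_of_injective hinj).trans_eq ?_
  rw [mk_prod, lift_id, lift_id, mk_Iio_ordinal, card_ord]

theorem mk_piSet_le_of_isGreatest {μ : Cardinal.{0}} (hμ : IsGreatest B μ) (hμ0 : ℵ₀ ≤ μ)
    (hlow : #(piSet (B ∩ Iio μ)) ≤ lift.{1} μ) :
    #(piSet B) ≤ lift.{1} μ :=
  (mk_piSet_le_mul_of_isGreatest hμ).trans <| (mul_le_mul_left hlow _).trans
    (mul_eq_self (aleph0_le_lift.2 hμ0)).le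

section Gap

variable {β : Cardinal.{0}} (hgap : ∀ b ∈ B, β < b → sSup B ≤ b)
include hgap

theorem isGreatest_sSup_of_gap (hbdd : BddAbove B) (hβ : β < sSup B) :
    IsGreatest B (sSup B) := by
  obtain ⟨b, hb, hβb⟩ := exists_lt_of_lt_csSup' hβ
  exact ⟨le_antisymm (le_csSup hbdd hb) (hgap b hb hβb) ▸ hb, fun c hc => le_csSup hbdd hc⟩

theorem sSup_inter_Iio_le_of_gap : sSup (B ∩ Iio (sSup B)) ≤ β :=
  csSup_le' fun b ⟨hb, hbμ⟩ => not_lt.1 fun hβb => (hgap b hb hβb).not_gt hbμ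

theorem mk_piSet_le_sSup_of_gap (hbdd : BddAbove B) (hB : ∀ a ∈ B, ℵ₀ ≤ a) (hβ : β < sSup B)
    (hlow : #(piSet (B ∩ Iio (sSup B))) ≤
      lift.{1} (Order.succ (sSup (B ∩ Iio (sSup B))))) :
    #(piSet B) ≤ lift.{1} (sSup B) := by
  have hμ := isGreatest_sSup_of_gap hgap hbdd hβ
  refine mk_piSet_le_of_isGreatest hμ (hB _ hμ.1) (hlow.trans (lift_le.2 ?_))
  exact Order.succ_le_of_lt ((sSup_inter_Iio_le_of_gap hgap).trans_lt hβ)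

end Gap

theorem mk_piSet_le_lift_succ_sSup
    (hgch : ∀ μ : Cardinal.{0}, IsLimitCard μ → 2 ^ μ = Order.succ μ)
    (hbdd : BddAbove B) (hB : ∀ a ∈ B, ℵ₀ ≤ a) :
    #(piSet B) ≤ lift.{1} (Order.succ (sSup B)) := by
  induction hμ : sSup B using WellFoundedLT.induction generalizing B with
  | ind μ IH =>
  rcases B.eq_empty_or_nonempty with rfl | ⟨b, hb⟩
  · simpa [← hμ] using mk_piSet_le_one rfl
  have hμ0 : ℵ₀ ≤ μ := hμ ▸ (hB b hb).trans (le_csSup hbdd hb)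
  by_cases hlim : IsLimitCard μ
  · rw [← hgch μ hlim, ← hμ]
    exact mk_piSet_le_lift_two_power hbdd (hμ ▸ hμ0)
  obtain ⟨ν, hνμ, hμν⟩ : ∃ ν < μ, μ ≤ Order.succ ν := by simpa [IsLimitCard, hμ0] using hlim
  subst hμ
  have hgap : ∀ c ∈ B, ν < c → sSup B ≤ c := fun c _ hc => hμν.trans (Order.succ_le_of_lt hc)
  refine (mk_piSet_le_sSup_of_gap hgap hbdd hB hνμ ?_).trans (lift_le.2 (Order.le_succ _))
  exact IH _ ((sSup_inter_Iio_le_of_gap hgap).trans_lt hνμ) (hbdd.mono inter_subset_left)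
    (fun a ha => hB a ha.1) rfl

section Cofinality

variable (D : Ultrafilter ↥A)

theorem cofUlt_le {S : Set (↥A → Ordinal.{0})} (hS : S ⊆ piSet A)
    (hcof : ∀ f ∈ piSet A, ∃ g ∈ S, {a | f a ≤ g a} ∈ D) : cofUlt A D ≤ #S :=
  csInf_le' ⟨S, hS, rfl, hcof⟩

theorem le_cofUlt {c : Cardinal.{1}}
    (h : ∀ S ⊆ piSet A, (∀ f ∈ piSet A, ∃ g ∈ S, {a | f a ≤ g a} ∈ D) → c ≤ #S) :
    c ≤ cofUlt A D := by
  refine le_csInf ⟨_, piSet A, subset_rfl, rfl,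
    fun f hf => ⟨f, hf, Filter.univ_mem' fun _ => mem_ofPred.2 le_rfl⟩⟩ ?_
  rintro _ ⟨S, hS, rfl, hcof⟩
  exact h S hS hcof

theorem cofUlt_le_mk_piSet : cofUlt A D ≤ #(piSet A) :=
  cofUlt_le D subset_rfl fun f hf => ⟨f, hf, Filter.univ_mem' fun _ => mem_ofPred.2 le_rfl⟩

theorem cofUlt_pure (hA : 0 ∉ A) {a : ↥A} (ha : (a : Cardinal).IsRegular) :
    cofUlt A (pure a) = lift.{1} (a : Cardinal) := by
  classical
  apply le_antisymm
  · have hS : range (fun o : Iio (a : Cardinal).ord => Pi.single a o.1) ⊆ piSet A := by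
      rintro _ ⟨o, rfl⟩
      exact single_mem_piSet hA o.2
    refine (cofUlt_le _ hS fun f hf => ⟨_, ⟨⟨f a, hf a⟩, rfl⟩, by simp⟩).trans ?_
    exact mk_range_le.trans_eq (by rw [mk_Iio_ordinal, card_ord])
  refine le_cofUlt _ fun S hS hcof => not_lt.1 fun hlt => ?_
  obtain ⟨o, ho, hSo⟩ := exists_lt_ord_forall_lt ha (f := fun g : S => g.1 a)
    (by simpa using hlt) fun g => hS g.2 a
  obtain ⟨g, hg, hle⟩ := hcof _ (single_mem_piSet hA ho)
  exact (hSo ⟨g, hg⟩).not_ge (by simpa using hle)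

theorem mem_pcf_of_mem (hA : 0 ∉ A) {κ : Cardinal.{0}} (hκA : κ ∈ A) (hκ : κ.IsRegular) :
    κ ∈ pcf A :=
  ⟨pure ⟨κ, hκA⟩, (cofUlt_pure hA (a := ⟨κ, hκA⟩) hκ).symm⟩

end Cofinality

theorem cofUlt_map_inclusion (hA : 0 ∉ A) (hBA : B ⊆ A) (D : Ultrafilter ↥B) :
    cofUlt A (D.map (inclusion hBA)) = cofUlt B D := by
  classical
  let res : (↥A → Ordinal.{0}) → ↥B → Ordinal.{0} := fun f b => f (inclusion hBA b)
  let ext : (↥B → Ordinal.{0}) → ↥A → Ordinal.{0} := fun g a =>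
    if h : (a : Cardinal) ∈ B then g ⟨a, h⟩ else 0
  have hres : ∀ f ∈ piSet A, res f ∈ piSet B := fun f hf b => hf _
  have hext : ∀ g ∈ piSet B, ext g ∈ piSet A := fun g hg a => by
    by_cases h : (a : Cardinal) ∈ B
    · simpa [ext, h] using hg ⟨a, h⟩
    · simpa [ext, h] using zero_mem_piSet hA a
  have hres_ext : ∀ g, res (ext g) = g := fun g => funext fun b => by simp [res, ext, b.2]
  apply le_antisymm
  · refine le_cofUlt _ fun S hS hcof => ?_
    refine (cofUlt_le _ (image_subset_iff.2 fun g hg => hext g (hS hg)) fun f hf => ?_).trans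
      mk_image_le
    obtain ⟨g, hg, hle⟩ := hcof (res f) (hres f hf)
    refine ⟨ext g, mem_image_of_mem _ hg,
      Ultrafilter.mem_map.2 (Filter.mem_of_superset hle fun b hb => ?_)⟩
    change res f b ≤ res (ext g) b
    rwa [hres_ext]
  · refine le_cofUlt _ fun S hS hcof => ?_
    refine (cofUlt_le _ (image_subset_iff.2 fun g hg => hres g (hS hg)) fun f hf => ?_).trans
      mk_image_le
    obtain ⟨g, hg, hle⟩ := hcof (ext f) (hext f hf)
    refine ⟨res g, mem_image_of_mem _ hg,
      Filter.mem_of_superset (Ultrafilter.mem_map.1 hle) fun b hb => ?_⟩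
    change res (ext f) b ≤ res g b at hb
    rwa [hres_ext] at hb

theorem pcf_mono (hA : 0 ∉ A) (hBA : B ⊆ A) : pcf B ⊆ pcf A := fun _ ⟨D, hD⟩ =>
  ⟨D.map (inclusion hBA), hD.trans (cofUlt_map_inclusion hA hBA D).symm⟩

section Diagonal

theorem exists_mem_gt_sSup_inter_Iio_eq {b : Cardinal.{0}} (hb : b ∈ B) (h : ∃ c ∈ B, b < c) :
    ∃ a ∈ B, b < a ∧ sSup (B ∩ Iio a) = b := by
  obtain ⟨a, ⟨haB, hba⟩, hmin⟩ := wellFounded_lt.has_min {c | c ∈ B ∧ b < c} h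
  refine ⟨a, haB, hba, le_antisymm ?_ (le_csSup ⟨a, fun _ hc => hc.2.le⟩ ⟨hb, hba⟩)⟩
  exact csSup_le' fun c ⟨hc, hca⟩ => not_lt.1 fun hbc => hmin c ⟨hc, hbc⟩ hca

theorem exists_ultrafilter_lt_sSup_inter_Iio {μ : Cardinal.{0}} (hμ : 0 < μ)
    (hunb : ∀ β < μ, ∃ b ∈ B, β < b ∧ b < μ) :
    ∃ D : Ultrafilter ↥B, ∀ β < μ,
      {a : ↥B | β < sSup (B ∩ Iio (a : Cardinal)) ∧ sSup (B ∩ Iio (a : Cardinal)) < a} ∈ D := by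
  let T := {a : ↥B // sSup (B ∩ Iio (a : Cardinal)) < a}
  have hT : ∀ β < μ, ∃ t : T, β < sSup (B ∩ Iio (t.1 : Cardinal)) := fun β hβ => by
    obtain ⟨b, hb, hβb, hbμ⟩ := hunb β hβ
    obtain ⟨c, hc, hbc, -⟩ := hunb b hbμ
    obtain ⟨a, ha, hba, hsup⟩ := exists_mem_gt_sSup_inter_Iio_eq hb ⟨c, hc, hbc⟩
    exact ⟨⟨⟨a, ha⟩, hsup ▸ hba⟩, hsup ▸ hβb⟩
  have : Nonempty T := let ⟨t, _⟩ := hT 0 hμ; ⟨t⟩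
  refine ⟨.of (Filter.map Subtype.val (Filter.atTop : Filter T)),
    fun β hβ => Ultrafilter.of_le _ ?_⟩
  obtain ⟨t₀, ht₀⟩ := hT β hβ
  refine Filter.mem_map.2 (Filter.mem_atTop_sets.2 ⟨t₀, fun t ht => ⟨ht₀.trans_le ?_, t.2⟩⟩)
  exact csSup_le_csSup' ⟨t.1, fun _ hc => hc.2.le⟩
    (inter_subset_inter_right _ (Iio_subset_Iio ht))

/-- Diagonalization over the points of `B` that are isolated from below: a family of at most `μ`
functions is enumerated by `μ`, and at such a point `a` only the fewer than `a` functions with index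
below `sSup (B ∩ Iio a)` need to be dominated. -/
theorem lift_lt_cofUlt (hB : ∀ a ∈ B, a.IsRegular) {μ : Cardinal.{0}} (D : Ultrafilter ↥B)
    (hD : ∀ β < μ,
      {a : ↥B | β < sSup (B ∩ Iio (a : Cardinal)) ∧ sSup (B ∩ Iio (a : Cardinal)) < a} ∈ D) :
    lift.{1} μ < cofUlt B D := by
  rw [← Order.succ_le_iff]
  refine le_cofUlt _ fun S hS hcof => Order.succ_le_of_lt (not_le.1 fun hle => ?_)
  obtain ⟨ι⟩ : Nonempty (S ↪ Iio μ.ord) := (le_def _ _).1 <| hle.trans_eq <| by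
    rw [mk_Iio_ordinal, card_ord]
  have hbound : ∀ a : ↥B, ∃ o < (a : Cardinal).ord, ∀ g : S,
      (ι g : Ordinal) < (sSup (B ∩ Iio (a : Cardinal))).ord →
        sSup (B ∩ Iio (a : Cardinal)) < a → g.1 a < o := by
    intro a
    by_cases ha : sSup (B ∩ Iio (a : Cardinal)) < a
    · set ν := sSup (B ∩ Iio (a : Cardinal))
      have hcard : #{g : S // (ι g : Ordinal) < ν.ord} ≤ #(Iio ν.ord) :=
        mk_le_of_injective (f := fun g => ⟨ι g.1, g.2⟩) fun g h hgh => by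
          rw [Subtype.ext_iff] at hgh
          exact Subtype.ext (ι.injective (Subtype.ext hgh))
      obtain ⟨o, ho, hlt⟩ := exists_lt_ord_forall_lt (hB a a.2)
        (f := fun g : {g : S // (ι g : Ordinal) < ν.ord} => g.1.1 a)
        (by simpa using hcard.trans_lt (by simpa using ha)) fun g => hS g.1.2 a
      exact ⟨o, ho, fun g hg _ => hlt ⟨g, hg⟩⟩
    · exact ⟨0, (hB a a.2).ord_pos, fun _ _ h => (ha h).elim⟩
  choose f hf hfS using hbound
  obtain ⟨g, hg, hfg⟩ := hcof f hf
  obtain ⟨a, hfga, hβ, hsup⟩ := Ultrafilter.nonempty_of_mem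
    (Filter.inter_mem hfg (hD _ (lt_ord.1 (ι ⟨g, hg⟩).2)))
  exact (hfS a ⟨g, hg⟩ (lt_ord.2 hβ) hsup).not_ge hfga

end Diagonal

theorem lift_le_mk_piSet_inter_Iio (hA : ∀ a ∈ A, a.IsRegular) {κ : Cardinal.{0}}
    (hκ : κ ∈ spec A) (hκA : κ ∉ A) : lift.{1} κ ≤ #(piSet (A ∩ Iio κ)) := by
  obtain ⟨hκreg, F, hFA, hFκ, hFunb⟩ := hκ
  by_contra! hlt
  let r : F → piSet (A ∩ Iio κ) := fun f => ⟨fun b => f.1 ⟨b.1, b.2.1⟩, fun b => hFA f.2 _⟩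
  obtain ⟨g, F₀, hF₀F, hκF₀, hF₀g⟩ := infinite_pigeonhole_set r _ hFκ.ge
    (aleph0_le_lift.2 hκreg.aleph0_le) (by rwa [hκreg.lift.cof_ord])
  have hF₀ : #F₀ = lift.{1} κ := le_antisymm (hFκ ▸ mk_le_mk_of_subset hF₀F) hκF₀
  refine hFunb F₀ hF₀F hF₀ (bddIn_of_forall_exists fun a => ?_)
  rcases lt_or_gt_of_ne fun h : (a : Cardinal) = κ => hκA (h ▸ a.2) with ha | ha
  · refine ⟨g.1 ⟨a, a.2, ha⟩, g.2 _, fun f hf => ?_⟩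
    rw [← hF₀g hf]
  · obtain ⟨o, ho, hlt⟩ := exists_lt_ord_forall_lt (hA a a.2) (f := fun f : F₀ => f.1 a)
      (by simpa [hF₀] using ha) fun f => hFA (hF₀F f.2) a
    exact ⟨o, ho, fun f hf => (hlt ⟨f, hf⟩).le⟩

theorem succ_sSup_mem_pcf (hgch : ∀ μ : Cardinal.{0}, IsLimitCard μ → 2 ^ μ = Order.succ μ)
    (hB : ∀ a ∈ B, a.IsRegular) (hbdd : BddAbove B) (hne : B.Nonempty)
    (hunb : ∀ β < sSup B, ∃ b ∈ B, β < b ∧ b < sSup B) : Order.succ (sSup B) ∈ pcf B := by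
  obtain ⟨b, hb⟩ := hne
  obtain ⟨D, hD⟩ :=
    exists_ultrafilter_lt_sSup_inter_Iio ((hB b hb).pos.trans_le (le_csSup hbdd hb)) hunb
  refine ⟨D, le_antisymm ?_ ?_⟩
  · rw [lift_succ]
    exact Order.succ_le_of_lt (lift_lt_cofUlt hB D hD)
  · exact (cofUlt_le_mk_piSet D).trans
      (mk_piSet_le_lift_succ_sSup hgch hbdd fun a ha => (hB a ha).aleph0_le)

theorem mem_pcf_of_notMem_of_gap
    (hgch : ∀ μ : Cardinal.{0}, IsLimitCard μ → 2 ^ μ = Order.succ μ)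
    (hA : ∀ a ∈ A, a.IsRegular) {κ : Cardinal.{0}} (hκ : κ ∈ spec A) (hκA : κ ∉ A)
    {β : Cardinal.{0}} (hβκ : β < κ) (hβ : ∀ a ∈ A, β < a → κ ≤ a) : κ ∈ pcf A := by
  set B := A ∩ Iio κ
  have hBβ : ∀ b ∈ B, b ≤ β := fun b ⟨hb, hbκ⟩ => not_lt.1 fun h => (hβ b hb h).not_gt hbκ
  have hbdd : BddAbove B := ⟨β, hBβ⟩
  have hB : ∀ a ∈ B, ℵ₀ ≤ a := fun a ha => (hA a ha.1).aleph0_le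
  have hκB : lift.{1} κ ≤ #(piSet B) := lift_le_mk_piSet_inter_Iio hA hκ hκA
  have hμκ : sSup B < κ := (csSup_le' hBβ).trans_lt hβκ
  by_cases hunb : ∀ β < sSup B, ∃ b ∈ B, β < b ∧ b < sSup B
  · have hne : B.Nonempty := nonempty_iff_ne_empty.2 fun h =>
      (hκB.trans (mk_piSet_le_one h)).not_gt
        (one_lt_aleph0.trans_le (aleph0_le_lift.2 hκ.1.aleph0_le))
    have hκμ : κ = Order.succ (sSup B) := le_antisymm
      (lift_le.1 (hκB.trans (mk_piSet_le_lift_succ_sSup hgch hbdd hB)))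
      (Order.succ_le_of_lt hμκ)
    exact hκμ ▸ pcf_mono (fun h => (hA 0 h).ne_zero rfl) inter_subset_left
      (succ_sSup_mem_pcf hgch (fun a ha => hA a ha.1) hbdd hne hunb)
  obtain ⟨β₁, hβ₁, hgap⟩ : ∃ β₁ < sSup B, ∀ b ∈ B, β₁ < b → sSup B ≤ b := by simpa using hunb
  have hBμ := mk_piSet_le_sSup_of_gap hgap hbdd hB hβ₁
    (mk_piSet_le_lift_succ_sSup hgch (hbdd.mono inter_subset_left) fun a ha => hB a ha.1)
  exact ((hκB.trans hBμ).not_gt (lift_lt.2 hμκ)).elim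

end

theorem statement9_general
    (hgch : ∀ μ : Cardinal.{0}, IsLimitCard μ → 2 ^ μ = Order.succ μ)
    (A : Set Cardinal.{0}) (hA : ∀ a ∈ A, a.IsRegular) :
    spec A ⊆ pcf A ∪ {κ | IsLimitPt A κ} := by
  intro κ hκ
  by_cases hlim : IsLimitPt A κ
  · exact Or.inr hlim
  refine Or.inl ?_
  by_cases hκA : κ ∈ A
  · exact mem_pcf_of_mem (fun h => (hA 0 h).ne_zero rfl) hκA (hA κ hκA)
  obtain ⟨β, hβκ, hβ⟩ : ∃ β < κ, ∀ a ∈ A, β < a → κ ≤ a := by simpa [IsLimitPt] using hlim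
  exact mem_pcf_of_notMem_of_gap hgch hA hκ hκA hβκ hβ

/-- If `2^μ = μ⁺` for every limit cardinal `μ` and there are no Mahlo
cardinals, then for every set `A` of infinite regular cardinals,
`spec(A) ⊆ pcf(A) ∪ lim(A)`. -/
theorem statement9
    (hgch : ∀ μ : Cardinal.{0}, IsLimitCard μ → 2 ^ μ = Order.succ μ)
    (hnoMahlo : ∀ κ : Cardinal.{0}, ¬ IsMahlo κ)
    (A : Set Cardinal.{0}) (hA : ∀ a ∈ A, a.IsRegular) :
    spec A ⊆ pcf A ∪ {κ | IsLimitPt A κ} :=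
  statement9_general hgch A hA

end TukeySpec
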